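/- arXiv:2110.15330 — 2 statements merged into one kernel-verified Lean document; each statement's English description precedes it below -/
import Mathlib

section
/- Let H be any conditional entropy, and let ρ be a bipartite density matrix on ℂ^d ⊗ ℂ^d (dA = dB = d) such that every eigenvalue of ρ is at most 1/d and the marginal on B is maximally mixed, Tr_A[ρ] = u_B. Then H(A|B)_ρ ≥ 0. -/
open Matrix Kronecker
open scoped ComplexOrder

noncomputable section

open scoped Classical

/-- Square complex matrices of size `n`. -/
abbrev Mat (n : ℕ) := Matrix (Fin n) (Fin n) ℂ

/-- Bipartite matrices on `ℂ^a ⊗ ℂ^b`. -/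
abbrev BMat (a b : ℕ) := Matrix (Fin a × Fin b) (Fin a × Fin b) ℂ

/-- A density matrix: positive semidefinite with trace one. -/
def IsDensity {ι : Type} [Fintype ι] (ρ : Matrix ι ι ℂ) : Prop :=
  ρ.PosSemidef ∧ ρ.trace = 1

/-- The maximally mixed state `I/n`. -/
def uMat (n : ℕ) : Mat n := (n : ℂ)⁻¹ • 1

/-- Choi matrix of a map on matrices. -/
def choi {ι κ : Type} [Fintype ι] [DecidableEq ι]
    (Φ : Matrix ι ι ℂ → Matrix κ κ ℂ) : Matrix (ι × κ) (ι × κ) ℂ :=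
  fun p q => Φ (Matrix.single p.1 q.1 1) p.2 q.2

/-- Quantum channel: linear, trace preserving, completely positive map. -/
def IsCPTP {ι κ : Type} [Fintype ι] [DecidableEq ι] [Fintype κ]
    (Φ : Matrix ι ι ℂ → Matrix κ κ ℂ) : Prop :=
  IsLinearMap ℂ Φ ∧ (∀ X, (Φ X).trace = X.trace) ∧ (choi Φ).PosSemidef

/-- Completely positive (not necessarily trace-preserving) map. -/
def IsCP {ι κ : Type} [Fintype ι] [DecidableEq ι] [Fintype κ]
    (Φ : Matrix ι ι ℂ → Matrix κ κ ℂ) : Prop :=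
  IsLinearMap ℂ Φ ∧ (choi Φ).PosSemidef

/-- Partial trace over the first tensor factor. -/
def ptraceA {α β : Type} [Fintype α] (M : Matrix (α × β) (α × β) ℂ) :
    Matrix β β ℂ := fun j j' => ∑ i, M (i, j) (i, j')

/-- Partial trace over the second tensor factor. -/
def ptraceB {α β : Type} [Fintype β] (M : Matrix (α × β) (α × β) ℂ) :
    Matrix α α ℂ := fun i i' => ∑ j, M (i, j) (i', j)

/-- The map `Φ ⊗ id` acting on the first tensor factor. -/
def lTensorId {α α' β : Type} (Φ : Matrix α α ℂ → Matrix α' α' ℂ)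
    (X : Matrix (α × β) (α × β) ℂ) : Matrix (α' × β) (α' × β) ℂ :=
  fun p q => Φ (fun k k' => X (k, p.2) (k', q.2)) p.1 q.1

/-- The map `id ⊗ Φ` acting on the second tensor factor. -/
def rTensorId {α β β' : Type} (Φ : Matrix β β ℂ → Matrix β' β' ℂ)
    (X : Matrix (α × β) (α × β) ℂ) : Matrix (α × β') (α × β') ℂ :=
  fun p q => Φ (fun k k' => X (p.1, k) (q.1, k')) p.2 q.2

/-- `A ↛ B'` semi-causality of a bipartite channel. -/
def SemiCausal {a b b' : ℕ} (N : BMat a b → BMat a b') : Prop :=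
  ∀ M : Mat a → Mat a, IsCPTP M →
    ∀ X : BMat a b, ptraceA (N (lTensorId M X)) = ptraceA (N X)

/-- Conditional unitality of a bipartite channel. -/
def CondUnital {a b b' : ℕ} (N : BMat a b → BMat a b') : Prop :=
  ∀ ρ : Mat b, IsDensity ρ →
    ∃ σ : Mat b', IsDensity σ ∧ N (uMat a ⊗ₖ ρ) = uMat a ⊗ₖ σ

/-- Conditionally unital semi-causal channels. -/
def CUSC {a b b' : ℕ} (N : BMat a b → BMat a b') : Prop :=
  IsCPTP N ∧ CondUnital N ∧ SemiCausal N

/-- The channel `X ↦ V X V†` associated with a matrix `V`. -/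
def isomChannel {a a' : ℕ} (V : Matrix (Fin a') (Fin a) ℂ) (X : Mat a) : Mat a' :=
  V * X * Vᴴ

/-- Conditional majorization `σ ≾_A ρ`. -/
def CondMajor {a' b' a b : ℕ} (σ : BMat a' b') (ρ : BMat a b) : Prop :=
  (a ≤ a' ∧ ∃ V : Matrix (Fin a') (Fin a) ℂ, Vᴴ * V = 1 ∧
      ∃ N : BMat a b → BMat a b', CUSC N ∧ σ = lTensorId (isomChannel V) (N ρ)) ∨
  (a' ≤ a ∧ ∃ U : Matrix (Fin a) (Fin a') ℂ, Uᴴ * U = 1 ∧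
      ∃ N : BMat a b → BMat a b', CUSC N ∧ lTensorId (isomChannel U) σ = N ρ)

/-- The tensor product `ρ_{AB} ⊗ τ_{A'B'}` regrouped as a state on `(AA')(BB')`. -/
def prodState {a b a' b' : ℕ} (ρ : BMat a b) (τ : BMat a' b') :
    BMat (a * a') (b * b') := fun p q =>
  ρ ((finProdFinEquiv.symm p.1).1, (finProdFinEquiv.symm p.2).1)
    ((finProdFinEquiv.symm q.1).1, (finProdFinEquiv.symm q.2).1) *
  τ ((finProdFinEquiv.symm p.1).2, (finProdFinEquiv.symm p.2).2)
    ((finProdFinEquiv.symm q.1).2, (finProdFinEquiv.symm q.2).2)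

/-- A conditional entropy: a real function on bipartite density matrices of all
finite dimensions, monotone under conditional majorization, additive under tensor
products, and normalized to `1` on the one-qubit maximally mixed state. -/
structure CondEntropy where
  H : ∀ {a b : ℕ}, BMat a b → ℝ
  mono : ∀ {a b a' b' : ℕ} (ρ : BMat a b) (σ : BMat a' b'),
    IsDensity ρ → IsDensity σ → CondMajor σ ρ → H ρ ≤ H σ
  additive : ∀ {a b a' b' : ℕ} (ρ : BMat a b) (τ : BMat a' b'),
    IsDensity ρ → IsDensity τ → H (prodState ρ τ) = H ρ + H τ
  normalized : H (uMat 2 ⊗ₖ (1 : Mat 1)) = 1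

/-- Maximally entangled state `φ⁺` on `ℂ^d ⊗ ℂ^d`. -/
def maxEnt (d : ℕ) : BMat d d :=
  fun p q => if p.1 = p.2 ∧ q.1 = q.2 then (d : ℂ)⁻¹ else 0

/-- The sum of the `k` largest values of `f`. -/
def sumTopK {ι : Type} [Fintype ι] [DecidableEq ι] (k : ℕ) (f : ι → ℝ) : ℝ :=
  (Finset.univ.powerset.filter fun s : Finset ι => s.card ≤ k).sup'
    ⟨∅, Finset.mem_filter.mpr ⟨Finset.mem_powerset.mpr (Finset.empty_subset _), by simp⟩⟩
    fun s => ∑ i ∈ s, f i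

/-- Ky Fan `k`-norm (sum of the `k` largest eigenvalues) of a hermitian matrix. -/
def kyFan {ι : Type} [Fintype ι] [DecidableEq ι] (k : ℕ) (X : Matrix ι ι ℂ) : ℝ :=
  if h : X.IsHermitian then sumTopK k h.eigenvalues else 0

/-- The rank-one projector `|v⟩⟨v|`. -/
def projv {n : ℕ} (v : Fin n → ℂ) : Mat n := fun i j => v i * star (v j)

/-- A rank-one projective measurement, given by an orthonormal family of vectors. -/
def IsRankOneMeas {n : ℕ} (u : Fin n → Fin n → ℂ) : Prop :=
  ∀ z z', (∑ i, star (u z i) * u z' i) = if z = z' then 1 else 0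

/-- A column-stochastic matrix. -/
def ColStochastic {a c : ℕ} (T : Matrix (Fin a) (Fin c) ℝ) : Prop :=
  (∀ w z, 0 ≤ T w z) ∧ ∀ z, ∑ w, T w z = 1

/-- Reward of the bipartite gambling game `(T, 0)` (no adversary). -/
def R0 {a b c : ℕ} (T : Matrix (Fin a) (Fin c) ℝ) (ρ : BMat a b) : ℝ :=
  ⨆ u : {u : Fin b → Fin b → ℂ // IsRankOneMeas u}, ⨆ f : Fin b → Fin c,
    ∑ z, ∑ w, T w (f z) *
      kyFan (w.1 + 1)
        (ptraceB (((1 : Mat a) ⊗ₖ projv (u.1 z)) * ρ * ((1 : Mat a) ⊗ₖ projv (u.1 z))))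

/-- Reward of the bipartite gambling game `(T, p)`. -/
def Rgame {a b c : ℕ} (T : Matrix (Fin a) (Fin c) ℝ) (p : ℝ) (ρ : BMat a b) : ℝ :=
  p * (⨅ v : {v : Fin a → Fin a → ℂ // IsRankOneMeas v},
        R0 T (∑ j, (projv (v.1 j) ⊗ₖ (1 : Mat b)) * ρ * (projv (v.1 j) ⊗ₖ (1 : Mat b)))) +
  (1 - p) * R0 T ρ

/-- Reward of a quantum-channel gambling game `ρ_{ABX} = Σ_x p_x ρ^{(x)}_{AB} ⊗ |x⟩⟨x|`
for a channel `N` with output system `A`. -/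
def Rch {n m dA b ℓ : ℕ} (N : Mat n → Mat m)
    (p : Fin ℓ → ℝ) (ρx : Fin ℓ → BMat dA b) : ℝ :=
  ⨆ E : {E : Mat dA → Mat n // IsCPTP E},
    ∑ x, p x * kyFan (x.1 + 1) (lTensorId (fun Y => N (E.1 Y)) (ρx x))

/-- The classical channel induced by a column-stochastic transition matrix. -/
def classicalChannel {x y : ℕ} (P : Matrix (Fin y) (Fin x) ℝ) : Mat x → Mat y :=
  fun ρ => Matrix.of fun i j => if i = j then ∑ k, (P i k : ℂ) * ρ k k else 0

/-- Classical game reward `Prob_T` of a classical channel with transition matrix `P`. -/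
def ProbT {yd xd wn zn : ℕ} (P : Matrix (Fin yd) (Fin xd) ℝ)
    (T : Matrix (Fin wn) (Fin zn) ℝ) : ℝ :=
  ∑ z, ⨆ x : Fin xd, ∑ w, T w z * sumTopK (w.1 + 1) (fun i => P i x)

/-- A joint probability matrix. -/
def JointProb {m n : ℕ} (P : Matrix (Fin m) (Fin n) ℝ) : Prop :=
  (∀ x y, 0 ≤ P x y) ∧ ∑ x, ∑ y, P x y = 1

/-- A row-stochastic matrix. -/
def RowStochastic {n n' : ℕ} (t : Matrix (Fin n) (Fin n') ℝ) : Prop :=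
  (∀ y w, 0 ≤ t y w) ∧ ∀ y, ∑ w, t y w = 1

/-- A doubly stochastic matrix. -/
def IsDoublyStochastic {m : ℕ} (d : Matrix (Fin m) (Fin m) ℝ) : Prop :=
  (∀ i j, 0 ≤ d i j) ∧ (∀ i, ∑ j, d i j = 1) ∧ (∀ j, ∑ i, d i j = 1)

/-- The quantum channel induced by a (doubly) stochastic matrix. -/
def dsChannel {m : ℕ} (d : Matrix (Fin m) (Fin m) ℝ) : Mat m → Mat m :=
  fun ρ => Matrix.of fun x x' => if x = x' then ∑ y, (d x y : ℂ) * ρ y y else 0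

/-- Diagonal bipartite state associated with a joint probability matrix. -/
def classicalState {m n : ℕ} (P : Matrix (Fin m) (Fin n) ℝ) : BMat m n :=
  Matrix.of fun p q => if p = q then (P p.1 p.2 : ℂ) else 0

/-- von Neumann entropy `S(ρ) = -Σ λ_i log₂ λ_i`. -/
def vnEntropy {ι : Type} [Fintype ι] [DecidableEq ι] (ρ : Matrix ι ι ℂ) : ℝ :=
  if h : ρ.IsHermitian then -∑ i, h.eigenvalues i * Real.logb 2 (h.eigenvalues i) else 0

/-- von Neumann conditional entropy `H(A|B) = S(ρ_AB) - S(ρ_B)`. -/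
def condVN {a b : ℕ} (ρ : BMat a b) : ℝ := vnEntropy ρ - vnEntropy (ptraceA ρ)

/-- Classical game reward for a classical bipartite state with joint distribution `q`
(`y` on `A`, `z` on `B`). -/
def ProbTstate {a b c : ℕ} (T : Matrix (Fin a) (Fin c) ℝ)
    (q : Matrix (Fin a) (Fin b) ℝ) : ℝ :=
  ∑ z, ⨆ z' : Fin c, ∑ w, T w z' * sumTopK (w.1 + 1) (fun y => q y z)

/-! The trivial state `1 : BMat 1 1` has conditional entropy `0` by additivity, and for `d = 1`
it is the only state. For `d ≥ 2` it majorizes the product state `|00⟩⟨00|` (prepare `|0⟩⟨0|` on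
`B` and embed `ℂ` into `ℂ^d` on `A`), and `|00⟩⟨00|` majorizes `ρ` through the
measure-and-prepare channel that outputs `ρ` on the outcomes `(0, j)` and
`ξ = (I/d - ρ)/(d - 1)` on all others. The eigenvalue bound says exactly that `ξ` is a state;
`ρ + (d - 1) ξ = I/d` makes the channel conditionally unital, and `Tr_A ξ = Tr_A ρ = u` makes
it semi-causal. -/

section PartialTrace

variable {α β : Type} [Fintype α]

lemma ptraceA_smul (c : ℂ) (M : Matrix (α × β) (α × β) ℂ) :
    ptraceA (c • M) = c • ptraceA M := by
  ext j j'
  simp [ptraceA, Finset.mul_sum]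

lemma ptraceA_sub (M N : Matrix (α × β) (α × β) ℂ) :
    ptraceA (M - N) = ptraceA M - ptraceA N := by
  ext j j'
  simp [ptraceA]

lemma ptraceA_sum {ι : Type} [Fintype ι] (M : ι → Matrix (α × β) (α × β) ℂ) :
    ptraceA (∑ i, M i) = ∑ i, ptraceA (M i) := by
  ext j j'
  simp only [ptraceA, Matrix.sum_apply]
  exact Finset.sum_comm

lemma ptraceA_one [DecidableEq α] [DecidableEq β] :
    ptraceA (1 : Matrix (α × β) (α × β) ℂ) = (Fintype.card α : ℂ) • 1 := by
  ext j j'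
  by_cases h : j = j' <;> simp [ptraceA, Matrix.one_apply, h]

lemma trace_lTensorId {α' : Type} [Fintype α'] [Fintype β] {M : Matrix α α ℂ → Matrix α' α' ℂ}
    (hM : ∀ X, (M X).trace = X.trace) (X : Matrix (α × β) (α × β) ℂ) :
    (lTensorId M X).trace = X.trace := by
  simp only [Matrix.trace, Matrix.diag, lTensorId, Fintype.sum_prod_type]
  rw [Finset.sum_comm, Finset.sum_comm (γ := α)]
  exact Finset.sum_congr rfl fun j _ => hM _

end PartialTrace

lemma lTensorId_isomChannel_one {a b : ℕ} (X : BMat a b) :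
    lTensorId (isomChannel (1 : Mat a)) X = X := by
  have h : isomChannel (1 : Mat a) = id := funext fun Y => by simp [isomChannel]
  rw [h]
  rfl

lemma lTensorId_kronecker {α α' β : Type} {Φ : Matrix α α ℂ → Matrix α' α' ℂ}
    (hΦ : IsLinearMap ℂ Φ) (A : Matrix α α ℂ) (B : Matrix β β ℂ) :
    lTensorId Φ (A ⊗ₖ B) = Φ A ⊗ₖ B := by
  ext p q
  have h : (fun k k' => A k k' * B p.2 q.2) = B p.2 q.2 • A := by
    ext k k'
    simp [mul_comm]
  simp only [lTensorId, Matrix.kroneckerMap_apply, h, hΦ.map_smul, Matrix.smul_apply, smul_eq_mul,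
    mul_comm]

lemma isLinearMap_isomChannel {a a' : ℕ} (V : Matrix (Fin a') (Fin a) ℂ) :
    IsLinearMap ℂ (isomChannel V) :=
  ⟨fun X Y => by simp [isomChannel, Matrix.mul_add, Matrix.add_mul],
    fun c X => by simp [isomChannel]⟩

section Density

variable {ι κ : Type} [Fintype ι] [Fintype κ]

lemma IsDensity.kronecker {ρ : Matrix ι ι ℂ} {σ : Matrix κ κ ℂ} (hρ : IsDensity ρ)
    (hσ : IsDensity σ) : IsDensity (ρ ⊗ₖ σ) :=
  ⟨hρ.1.kronecker hσ.1, by rw [Matrix.trace_kronecker, hρ.2, hσ.2, one_mul]⟩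

lemma isDensity_single [DecidableEq ι] (i : ι) : IsDensity (single i i (1 : ℂ)) := by
  refine ⟨?_, by simp⟩
  rw [← Matrix.diagonal_single]
  exact Matrix.PosSemidef.diagonal fun j => by
    by_cases h : j = i <;> simp [h]

lemma isDensity_uMat {n : ℕ} (hn : n ≠ 0) : IsDensity (uMat n) :=
  ⟨Matrix.PosSemidef.one.smul (by positivity), by simp [uMat, hn]⟩

lemma isDensity_one [DecidableEq ι] (h : Fintype.card ι = 1) : IsDensity (1 : Matrix ι ι ℂ) :=
  ⟨Matrix.PosSemidef.one, by simp [h]⟩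

lemma IsDensity.eq_one [Subsingleton ι] [DecidableEq ι] {ρ : Matrix ι ι ℂ}
    (hρ : IsDensity ρ) : ρ = 1 := by
  ext i j
  obtain rfl := Subsingleton.elim i j
  simpa [Matrix.trace, Fintype.sum_subsingleton _ i] using hρ.2

end Density

lemma CondEntropy.H_one (E : CondEntropy) : E.H (1 : BMat 1 1) = 0 := by
  have h1 : IsDensity (1 : BMat 1 1) := isDensity_one rfl
  have h := E.additive _ _ h1 h1
  have hprod : prodState (1 : BMat 1 1) (1 : BMat 1 1) = 1 := by
    ext p q
    obtain rfl : p = q := Prod.ext (Fin.ext (by omega)) (Fin.ext (by omega))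
    simp [prodState]
  rw [hprod] at h
  linarith

section MeasurePrepare

variable {ι κ : Type} [Fintype ι]

def measPrep (ω : ι → Matrix κ κ ℂ) (Y : Matrix ι ι ℂ) : Matrix κ κ ℂ :=
  ∑ r, Y r r • ω r

variable (ω : ι → Matrix κ κ ℂ)

lemma measPrep_single [DecidableEq ι] (r : ι) : measPrep ω (single r r 1) = ω r := by
  rw [measPrep, Finset.sum_eq_single r (fun s _ hs => by simp [hs.symm]) (by simp)]
  simp

lemma measPrep_const (τ : Matrix κ κ ℂ) (Y : Matrix ι ι ℂ) :
    measPrep (fun _ => τ) Y = Y.trace • τ := by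
  simp [measPrep, Matrix.trace, Finset.sum_smul]

lemma isLinearMap_measPrep : IsLinearMap ℂ (measPrep ω) :=
  ⟨fun X Y => by simp [measPrep, add_smul, Finset.sum_add_distrib],
    fun c X => by simp [measPrep, Finset.smul_sum, smul_smul]⟩

lemma trace_measPrep [Fintype κ] (hω : ∀ r, (ω r).trace = 1) (Y : Matrix ι ι ℂ) :
    (measPrep ω Y).trace = Y.trace := by
  simp only [measPrep, Matrix.trace_sum, Matrix.trace_smul, hω, smul_eq_mul, mul_one]
  rfl

lemma choi_measPrep [DecidableEq ι] :
    choi (measPrep ω) = ∑ r, single r r 1 ⊗ₖ ω r := by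
  ext p q
  simp only [choi, measPrep, Matrix.sum_apply, Matrix.smul_apply, smul_eq_mul,
    Matrix.kroneckerMap_apply]
  refine Finset.sum_congr rfl fun r _ => ?_
  simp [Matrix.single_apply, eq_comm]

lemma isCPTP_measPrep [DecidableEq ι] [Fintype κ] (hω : ∀ r, IsDensity (ω r)) :
    IsCPTP (measPrep ω) := by
  refine ⟨isLinearMap_measPrep ω, trace_measPrep ω fun r => (hω r).2, ?_⟩
  rw [choi_measPrep]
  exact Matrix.posSemidef_sum _ fun r _ => (isDensity_single r).1.kronecker (hω r).1

end MeasurePrepare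

lemma posSemidef_smul_one_sub {n : Type} [Fintype n] [DecidableEq n] {A : Matrix n n ℂ}
    (hA : A.IsHermitian) {c : ℝ} (h : ∀ i, hA.eigenvalues i ≤ c) :
    ((c : ℂ) • 1 - A).PosSemidef := by
  rw [Matrix.posSemidef_iff_isHermitian_and_spectrum_nonneg]
  refine ⟨by simp [Matrix.IsHermitian, Matrix.conjTranspose_sub, hA.eq], ?_⟩
  rw [← Algebra.algebraMap_eq_smul_one, ← spectrum.singleton_sub_eq, hA.spectrum_eq_image_range]
  rintro _ ⟨_, rfl, _, ⟨_, ⟨i, rfl⟩, rfl⟩, rfl⟩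
  simpa [← Complex.ofReal_sub] using h i

section BipartiteMeasurePrepare

variable {a b b' : ℕ} (ω : Fin a × Fin b → BMat a b')

lemma ptraceA_measPrep {τ : Mat b'} (hω : ∀ r, ptraceA (ω r) = τ) (Y : BMat a b) :
    ptraceA (measPrep ω Y) = Y.trace • τ := by
  simp only [measPrep, ptraceA_sum, ptraceA_smul, hω, ← Finset.sum_smul]
  rfl

lemma semiCausal_measPrep {τ : Mat b'} (hω : ∀ r, ptraceA (ω r) = τ) :
    SemiCausal (measPrep ω) := fun M hM X => by
  rw [ptraceA_measPrep ω hω, ptraceA_measPrep ω hω, trace_lTensorId hM.2.1]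

lemma condUnital_measPrep {σ : Mat b'} (hσ : IsDensity σ)
    (hω : ∀ j, (a : ℂ)⁻¹ • ∑ i, ω (i, j) = uMat a ⊗ₖ σ) : CondUnital (measPrep ω) := by
  intro ρ hρ
  refine ⟨σ, hσ, ?_⟩
  have hdiag : ∀ r : Fin a × Fin b, (uMat a ⊗ₖ ρ) r r = (a : ℂ)⁻¹ * ρ r.2 r.2 := fun r => by
    simp [uMat]
  calc measPrep ω (uMat a ⊗ₖ ρ)
      = ∑ j, ρ j j • ((a : ℂ)⁻¹ • ∑ i, ω (i, j)) := by
        simp only [measPrep, hdiag, Fintype.sum_prod_type, Finset.smul_sum, smul_smul]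
        rw [Finset.sum_comm]
        simp only [mul_comm]
    _ = uMat a ⊗ₖ σ := by
        simp only [hω, ← Finset.sum_smul]
        rw [show ∑ j, ρ j j = ρ.trace from rfl, hρ.2, one_smul]

lemma cusc_measPrep (hω : ∀ r, IsDensity (ω r)) {τ : Mat b'} (hmarg : ∀ r, ptraceA (ω r) = τ)
    {σ : Mat b'} (hσ : IsDensity σ) (hunital : ∀ j, (a : ℂ)⁻¹ • ∑ i, ω (i, j) = uMat a ⊗ₖ σ) :
    CUSC (measPrep ω) :=
  ⟨isCPTP_measPrep ω hω, condUnital_measPrep ω hσ hunital, semiCausal_measPrep ω hmarg⟩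

end BipartiteMeasurePrepare

lemma condMajor_single_one {a b : ℕ} (i : Fin a) (j : Fin b) :
    CondMajor (single (i, j) (i, j) 1 : BMat a b) (1 : BMat 1 1) := by
  have hu : uMat 1 = 1 := by simp [uMat]
  have hτ : IsDensity (uMat 1 ⊗ₖ single j j 1) :=
    (isDensity_uMat one_ne_zero).kronecker (isDensity_single j)
  set V : Matrix (Fin a) (Fin 1) ℂ := single i 0 1
  have hV : Vᴴ * V = 1 := by
    ext k l
    fin_cases k; fin_cases l
    simp [V, Matrix.conjTranspose_single]
  refine Or.inl ⟨i.pos, V, hV, _,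
    cusc_measPrep _ (fun _ => hτ) (fun _ => rfl) (isDensity_single j) (fun _ => by simp), ?_⟩
  simp only [measPrep_const, Matrix.trace_one, Fintype.card_prod, Fintype.card_fin, mul_one,
    Nat.cast_one, one_smul]
  rw [lTensorId_kronecker (isLinearMap_isomChannel _)]
  simp [V, isomChannel, hu, Matrix.conjTranspose_single, Matrix.single_kronecker_single]

lemma condMajor_of_add_smul_eq {a b : ℕ} (i : Fin a) (j : Fin b) {ρ ξ : BMat a b} {σ : Mat b}
    (hρ : IsDensity ρ) (hξ : IsDensity ξ) (hσ : IsDensity σ) (hmarg : ptraceA ξ = ptraceA ρ)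
    (hmix : ρ + ((a : ℂ) - 1) • ξ = 1 ⊗ₖ σ) :
    CondMajor ρ (single (i, j) (i, j) 1) := by
  set ω : Fin a × Fin b → BMat a b := fun r => if r.1 = i then ρ else ξ
  have hsum : ∀ l, ∑ k, ω (k, l) = ρ + ((a : ℂ) - 1) • ξ := fun l => by
    have hω : ∀ k, ω (k, l) = ξ + if k = i then ρ - ξ else 0 := fun k => by
      by_cases h : k = i <;> simp [ω, h]
    simp only [hω, Finset.sum_add_distrib, Finset.sum_ite_eq', Finset.mem_univ, if_true,
      Finset.sum_const, Finset.card_univ, Fintype.card_fin, sub_smul, one_smul,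
      ← Nat.cast_smul_eq_nsmul ℂ]
    abel
  refine Or.inl ⟨le_rfl, 1, by simp, measPrep ω, cusc_measPrep ω (τ := ptraceA ρ) ?_ ?_ hσ ?_, ?_⟩
  · intro r; by_cases h : r.1 = i <;> simp [ω, h, hρ, hξ]
  · intro r; by_cases h : r.1 = i <;> simp [ω, h, hmarg]
  · intro l
    rw [hsum, hmix, uMat, Matrix.smul_kronecker]
  · rw [lTensorId_isomChannel_one, measPrep_single]
    simp [ω]

section ComplementaryState

variable {d : ℕ} (ρ : BMat d d)

def complState : BMat d d := ((d : ℂ) - 1)⁻¹ • ((d : ℂ)⁻¹ • 1 - ρ)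

lemma add_smul_complState (hd : d ≠ 1) : ρ + ((d : ℂ) - 1) • complState ρ = 1 ⊗ₖ uMat d := by
  have h : (d : ℂ) - 1 ≠ 0 := sub_ne_zero.2 (by exact_mod_cast hd)
  rw [complState, smul_smul, mul_inv_cancel₀ h, one_smul, add_sub_cancel, uMat,
    Matrix.kronecker_smul, Matrix.one_kronecker_one]

lemma ptraceA_complState (hd : 1 < d) (hmarg : ptraceA ρ = uMat d) :
    ptraceA (complState ρ) = ptraceA ρ := by
  have h0 : (d : ℂ) ≠ 0 := by exact_mod_cast (by omega : d ≠ 0)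
  have h1 : (d : ℂ) - 1 ≠ 0 := sub_ne_zero.2 (by exact_mod_cast (by omega : d ≠ 1))
  rw [complState, ptraceA_smul, ptraceA_sub, ptraceA_smul, ptraceA_one, hmarg, uMat,
    Fintype.card_fin, smul_smul, ← sub_smul, smul_smul]
  congr 1
  field_simp

lemma isDensity_complState (hd : 1 < d) (hρ : IsDensity ρ)
    (heig : ∀ i, hρ.1.1.eigenvalues i ≤ 1 / (d : ℝ)) : IsDensity (complState ρ) := by
  constructor
  · have hc : (((d : ℝ) - 1)⁻¹ : ℝ) = ((d : ℂ) - 1)⁻¹ := by push_cast; rfl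
    have hle := posSemidef_smul_one_sub hρ.1.1 (c := (d : ℝ)⁻¹) (by simpa using heig)
    rw [complState, ← hc]
    push_cast at hle
    exact hle.smul (Complex.zero_le_real.2 (inv_nonneg.2 (by
      rw [sub_nonneg]; exact_mod_cast hd.le)))
  · have h1 : (d : ℂ) - 1 ≠ 0 := sub_ne_zero.2 (by exact_mod_cast (by omega : d ≠ 1))
    rw [complState, Matrix.trace_smul, Matrix.trace_sub, Matrix.trace_smul, Matrix.trace_one,
      hρ.2]
    simp only [Fintype.card_prod, Fintype.card_fin, smul_eq_mul]
    push_cast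
    field_simp

end ComplementaryState

/-- nonnegativity of conditional entropy for states with small
eigenvalues and maximally mixed `B` marginal. -/
theorem condEntropy_nonneg_of_small_eigenvalues (E : CondEntropy) {d : ℕ}
    (ρ : BMat d d) (hρ : IsDensity ρ)
    (heig : ∀ i, hρ.1.1.eigenvalues i ≤ 1 / (d : ℝ))
    (hmarg : ptraceA ρ = uMat d) :
    0 ≤ E.H ρ := by
  have hd0 : d ≠ 0 := by
    rintro rfl
    simpa [Matrix.trace] using hρ.2
  obtain rfl | hd1 := eq_or_ne d 1
  · rw [hρ.eq_one, E.H_one]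
  have hd : 1 < d := by omega
  let i : Fin d := ⟨0, by omega⟩
  have hs := isDensity_single (i, i)
  calc 0 = E.H (1 : BMat 1 1) := E.H_one.symm
    _ ≤ E.H (single (i, i) (i, i) 1) :=
      E.mono _ _ (isDensity_one rfl) hs (condMajor_single_one i i)
    _ ≤ E.H ρ := E.mono _ _ hs hρ <|
      condMajor_of_add_smul_eq i i hρ (isDensity_complState ρ hd hρ heig) (isDensity_uMat hd0)
        (ptraceA_complState ρ hd hmarg) (add_smul_complState ρ hd1)
end
end

section
/- For the maximally entangled state φ⁺ on ℂ^d ⊗ ℂ^d, the gambling reward equals 1 for every game: R_{T,p}(φ⁺) = 1 for every column-stochastic transition matrix T and every p ∈ [0,1]. -/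
open Matrix Kronecker
open scoped ComplexOrder

noncomputable section

open scoped Classical

/-!
Measuring `B` with a rank-one measurement splits any density matrix into unnormalised states
on `A` whose traces add up to one. A Ky Fan norm of a positive matrix is at most its trace and
every column of `T` sums to one, so no strategy earns more than `1`. For `φ⁺`, and for `φ⁺`
dephased on `A` in any basis `{v_j}`, measuring `B` in the conjugate basis `{v̄_z}` leaves `A`
in the pure state `|v_z⟩⟨v_z| / d`, all of whose Ky Fan norms equal its trace; so the bound is
attained with or without the adversary, whatever `p` is.
-/

section KyFan

variable {ι : Type} [Fintype ι] [DecidableEq ι]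

lemma sumTopK_le_sum (k : ℕ) {f : ι → ℝ} (hf : ∀ i, 0 ≤ f i) : sumTopK k f ≤ ∑ i, f i :=
  Finset.sup'_le _ _ fun s _ =>
    Finset.sum_le_sum_of_subset_of_nonneg (Finset.subset_univ s) fun i _ _ => hf i

lemma le_sumTopK {k : ℕ} (hk : 1 ≤ k) (f : ι → ℝ) (i : ι) : f i ≤ sumTopK k f := by
  have hi : {i} ∈ Finset.univ.powerset.filter fun s : Finset ι => s.card ≤ k := by simp [hk]
  exact (Finset.sum_singleton f i).ge.trans (Finset.le_sup' (fun s => ∑ i ∈ s, f i) hi)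

lemma Matrix.PosSemidef.kyFan_le_trace {A : Matrix ι ι ℂ} (hA : A.PosSemidef) (k : ℕ) :
    kyFan k A ≤ A.trace.re := by
  rw [kyFan, dif_pos hA.isHermitian, hA.isHermitian.trace_eq_sum_eigenvalues]
  simpa [Complex.re_sum] using sumTopK_le_sum k hA.eigenvalues_nonneg

lemma Matrix.IsHermitian.le_kyFan_of_mulVec_eq {A : Matrix ι ι ℂ} (hA : A.IsHermitian)
    {k : ℕ} (hk : 1 ≤ k) {x : ι → ℂ} (hx : x ≠ 0) {c : ℝ} (hAx : A *ᵥ x = (c : ℂ) • x) :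
    c ≤ kyFan k A := by
  have hc : (c : ℂ) ∈ spectrum ℂ A := by
    rw [← Matrix.spectrum_toLin']
    exact (Module.End.hasEigenvalue_of_hasEigenvector
      ⟨Module.End.mem_eigenspace_iff.mpr hAx, hx⟩).mem_spectrum
  obtain ⟨i, hi⟩ : c ∈ Set.range hA.eigenvalues := by
    rwa [← hA.spectrum_real_eq_range_eigenvalues, ← spectrum.algebraMap_mem_iff ℂ]
  rw [kyFan, dif_pos hA, ← hi]
  exact le_sumTopK hk _ i

end KyFan

section RankOneMeas

variable {n : ℕ}

lemma projv_eq_vecMulVec (v : Fin n → ℂ) : projv v = vecMulVec v (star v) := rfl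

lemma projv_posSemidef (v : Fin n → ℂ) : (projv v).PosSemidef :=
  posSemidef_vecMulVec_self_star v

lemma transpose_projv_star (v : Fin n → ℂ) : (projv (star v))ᵀ = projv v := by
  ext i j
  simp [projv, mul_comm]

lemma projv_mulVec_self {v : Fin n → ℂ} (hv : star v ⬝ᵥ v = 1) : projv v *ᵥ v = v := by
  rw [projv_eq_vecMulVec, vecMulVec_mulVec, hv, MulOpposite.op_one, one_smul]

lemma projv_mul_self {v : Fin n → ℂ} (hv : star v ⬝ᵥ v = 1) : projv v * projv v = projv v := by
  rw [projv_eq_vecMulVec, vecMulVec_mul_vecMulVec, hv, one_smul]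

lemma isRankOneMeas_iff {u : Fin n → Fin n → ℂ} :
    IsRankOneMeas u ↔ (of u).map star * (of u)ᵀ = 1 := by
  simp only [IsRankOneMeas, ← Matrix.ext_iff, Matrix.mul_apply, Matrix.one_apply]
  rfl

lemma isRankOneMeas_one : IsRankOneMeas fun z i => (1 : Mat n) z i := by
  rw [isRankOneMeas_iff, show (of fun z i => (1 : Mat n) z i) = 1 from rfl]
  simp

lemma IsRankOneMeas.conj {u : Fin n → Fin n → ℂ} (hu : IsRankOneMeas u) :
    IsRankOneMeas fun z => star (u z) := by
  rw [isRankOneMeas_iff] at hu ⊢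
  have hstar : ((of u).map star).map star = of u := by ext; simp
  rw [show (of fun z => star (u z)) = (of u).map star from rfl, hstar,
    ← transpose_transpose (of u), ← transpose_mul, transpose_transpose, hu, transpose_one]

lemma IsRankOneMeas.dotProduct_self {u : Fin n → Fin n → ℂ} (hu : IsRankOneMeas u) (z : Fin n) :
    star (u z) ⬝ᵥ u z = 1 :=
  (hu z z).trans (if_pos rfl)

lemma IsRankOneMeas.projv_mul_projv {u : Fin n → Fin n → ℂ} (hu : IsRankOneMeas u)
    (z z' : Fin n) : projv (u z) * projv (u z') = if z = z' then projv (u z) else 0 := by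
  rw [projv_eq_vecMulVec, projv_eq_vecMulVec, vecMulVec_mul_vecMulVec,
    show star (u z) ⬝ᵥ u z' = _ from hu z z']
  split_ifs with h
  · rw [h, one_smul]
  · rw [zero_smul, vecMulVec_zero]

lemma IsRankOneMeas.sum_projv {u : Fin n → Fin n → ℂ} (hu : IsRankOneMeas u) :
    ∑ z, projv (u z) = 1 := by
  rw [isRankOneMeas_iff, mul_eq_one_comm] at hu
  rw [← hu]
  ext i j
  simp [projv, Matrix.sum_apply, Matrix.mul_apply]

end RankOneMeas

section Kronecker

variable {l m : Type}

lemma Matrix.IsHermitian.kronecker {A : Matrix l l ℂ} {B : Matrix m m ℂ} (hA : A.IsHermitian)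
    (hB : B.IsHermitian) : (A ⊗ₖ B).IsHermitian := by
  rw [IsHermitian, conjTranspose_kronecker, hA.eq, hB.eq]

lemma kronecker_sum {ι : Type} (A : Matrix l l ℂ) (B : ι → Matrix m m ℂ) (s : Finset ι) :
    A ⊗ₖ (∑ z ∈ s, B z) = ∑ z ∈ s, A ⊗ₖ B z := by
  ext ⟨i, j⟩ ⟨i', j'⟩
  simp [Matrix.sum_apply, Finset.mul_sum]

lemma sum_kronecker {ι : Type} (A : ι → Matrix l l ℂ) (B : Matrix m m ℂ) (s : Finset ι) :
    (∑ z ∈ s, A z) ⊗ₖ B = ∑ z ∈ s, A z ⊗ₖ B := by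
  ext ⟨i, j⟩ ⟨i', j'⟩
  simp [Matrix.sum_apply, Finset.sum_mul]

end Kronecker

lemma Matrix.PosSemidef.mul_mul_of_isHermitian {κ : Type} [Fintype κ] {ρ Q : Matrix κ κ ℂ}
    (hρ : ρ.PosSemidef) (hQ : Q.IsHermitian) : (Q * ρ * Q).PosSemidef := by
  simpa [hQ.eq] using hρ.mul_mul_conjTranspose_same Q

lemma sum_trace_mul_mul_of_idempotent {ι κ : Type} [Fintype ι] [Fintype κ] [DecidableEq κ]
    {Q : ι → Matrix κ κ ℂ} (hQ : ∀ z, Q z * Q z = Q z) (hsum : ∑ z, Q z = 1)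
    (ρ : Matrix κ κ ℂ) : ∑ z, (Q z * ρ * Q z).trace = ρ.trace := by
  calc ∑ z, (Q z * ρ * Q z).trace = ∑ z, (ρ * Q z).trace := by
        refine Finset.sum_congr rfl fun z _ => ?_
        rw [Matrix.mul_assoc, trace_mul_comm, Matrix.mul_assoc, hQ]
    _ = ρ.trace := by rw [← trace_sum, ← Matrix.mul_sum, hsum, Matrix.mul_one]

section PartialTrace

variable {α β : Type} [Fintype β]

lemma ptraceB_eq_sum_submatrix (M : Matrix (α × β) (α × β) ℂ) :
    ptraceB M = ∑ j, M.submatrix (·, j) (·, j) := by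
  ext i i'
  simp [ptraceB, Matrix.sum_apply]

lemma Matrix.PosSemidef.ptraceB [Fintype α] {M : Matrix (α × β) (α × β) ℂ} (hM : M.PosSemidef) :
    (ptraceB M).PosSemidef := by
  rw [ptraceB_eq_sum_submatrix]
  exact posSemidef_sum _ fun j _ => hM.submatrix _

lemma trace_ptraceB [Fintype α] (M : Matrix (α × β) (α × β) ℂ) : (ptraceB M).trace = M.trace := by
  simp [Matrix.trace, ptraceB, Fintype.sum_prod_type]

lemma ptraceB_sum {ι : Type} (M : ι → Matrix (α × β) (α × β) ℂ) (s : Finset ι) :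
    ptraceB (∑ i ∈ s, M i) = ∑ i ∈ s, ptraceB (M i) := by
  ext i i'
  simp only [ptraceB, Matrix.sum_apply]
  exact Finset.sum_comm

lemma ptraceB_kronecker_one_mul_mul [Fintype α] [DecidableEq β] (A C : Matrix α α ℂ)
    (M : Matrix (α × β) (α × β) ℂ) :
    ptraceB ((A ⊗ₖ (1 : Matrix β β ℂ)) * M * (C ⊗ₖ 1)) = A * ptraceB M * C := by
  ext i i'
  simp only [ptraceB, Matrix.mul_apply, kroneckerMap_apply, Matrix.one_apply, mul_ite, mul_one,
    mul_zero, ite_mul, zero_mul, Fintype.sum_prod_type, Finset.sum_ite_eq, Finset.mem_univ,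
    ↓reduceIte, Finset.sum_mul, Finset.sum_ite_eq', Finset.mul_sum]
  rw [Finset.sum_comm]
  exact Finset.sum_congr rfl fun _ _ => Finset.sum_comm

end PartialTrace

section Game

variable {a b c : ℕ}

/-- The (unnormalised) state left on `A` when the measurement on `B` yields `|u⟩`. -/
def condState (u : Fin b → ℂ) (ρ : BMat a b) : Mat a :=
  ptraceB (((1 : Mat a) ⊗ₖ projv u) * ρ * ((1 : Mat a) ⊗ₖ projv u))

lemma Matrix.PosSemidef.condState {ρ : BMat a b} (hρ : ρ.PosSemidef) (u : Fin b → ℂ) :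
    (condState u ρ).PosSemidef :=
  (hρ.mul_mul_of_isHermitian (isHermitian_one.kronecker (projv_posSemidef u).isHermitian)).ptraceB

lemma IsRankOneMeas.sum_trace_condState {u : Fin b → Fin b → ℂ} (hu : IsRankOneMeas u)
    (ρ : BMat a b) : ∑ z, (condState (u z) ρ).trace = ρ.trace := by
  simp only [condState, trace_ptraceB]
  refine sum_trace_mul_mul_of_idempotent (fun z => ?_) ?_ ρ
  · rw [← mul_kronecker_mul, Matrix.one_mul, hu.projv_mul_projv, if_pos rfl]
  · rw [← kronecker_sum, hu.sum_projv, one_kronecker_one]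

def gameScore (T : Matrix (Fin a) (Fin c) ℝ) (ρ : BMat a b) (u : Fin b → Fin b → ℂ)
    (f : Fin b → Fin c) : ℝ :=
  ∑ z, ∑ w, T w (f z) * kyFan (w.1 + 1) (condState (u z) ρ)

variable {T : Matrix (Fin a) (Fin c) ℝ} {ρ : BMat a b}

lemma gameScore_le_one (hT : ColStochastic T) (hρ : IsDensity ρ) {u : Fin b → Fin b → ℂ}
    (hu : IsRankOneMeas u) (f : Fin b → Fin c) : gameScore T ρ u f ≤ 1 := by
  calc gameScore T ρ u f ≤ ∑ z, ∑ w, T w (f z) * (condState (u z) ρ).trace.re :=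
        Finset.sum_le_sum fun z _ => Finset.sum_le_sum fun w _ =>
          mul_le_mul_of_nonneg_left ((hρ.1.condState _).kyFan_le_trace _) (hT.1 w (f z))
    _ = ∑ z, (condState (u z) ρ).trace.re := by simp_rw [← Finset.sum_mul, hT.2, one_mul]
    _ = 1 := by rw [← Complex.re_sum, hu.sum_trace_condState, hρ.2, Complex.one_re]

lemma R0_le_one (hT : ColStochastic T) (hρ : IsDensity ρ) : R0 T ρ ≤ 1 :=
  Real.iSup_le (fun u => Real.iSup_le (gameScore_le_one hT hρ u.2) zero_le_one) zero_le_one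

lemma gameScore_le_R0 (hT : ColStochastic T) (hρ : IsDensity ρ) {u : Fin b → Fin b → ℂ}
    (hu : IsRankOneMeas u) (f : Fin b → Fin c) : gameScore T ρ u f ≤ R0 T ρ := by
  refine le_ciSup_of_le ⟨1, Set.forall_mem_range.2 fun u => ?_⟩ ⟨u, hu⟩ (le_ciSup ?_ f)
  · exact Real.iSup_le (gameScore_le_one hT hρ u.2) zero_le_one
  · exact ⟨1, Set.forall_mem_range.2 (gameScore_le_one hT hρ hu)⟩

lemma R0_eq_one_of_condState_eq (hc : 0 < c) (hT : ColStochastic T) (hρ : IsDensity ρ)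
    (hb : 0 < b) {u : Fin b → Fin b → ℂ} (hu : IsRankOneMeas u) {v : Fin b → Fin a → ℂ}
    (hv : ∀ z, star (v z) ⬝ᵥ v z = 1) (hX : ∀ z, condState (u z) ρ = (b : ℂ)⁻¹ • projv (v z)) :
    R0 T ρ = 1 := by
  have hkyFan : ∀ z (w : Fin a), (b : ℝ)⁻¹ ≤ kyFan (w.1 + 1) (condState (u z) ρ) := by
    intro z w
    refine (hρ.1.condState _).isHermitian.le_kyFan_of_mulVec_eq (Nat.le_add_left 1 w.1)
      (x := v z) (fun h => by simpa [h] using hv z) ?_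
    rw [hX, smul_mulVec, projv_mulVec_self (hv z), Complex.ofReal_inv, Complex.ofReal_natCast]
  let f : Fin b → Fin c := fun _ => ⟨0, hc⟩
  refine le_antisymm (R0_le_one hT hρ) ?_
  calc (1 : ℝ) = ∑ z : Fin b, ∑ w, T w (f z) * (b : ℝ)⁻¹ := by
        simp only [← Finset.sum_mul, hT.2, Finset.sum_const, Finset.card_univ,
          Fintype.card_fin, nsmul_eq_mul, mul_one]
        exact (mul_inv_cancel₀ (by positivity)).symm
    _ ≤ gameScore T ρ u f := Finset.sum_le_sum fun z _ => Finset.sum_le_sum fun w _ =>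
        mul_le_mul_of_nonneg_left (hkyFan z w) (hT.1 w (f z))
    _ ≤ R0 T ρ := gameScore_le_R0 hT hρ hu f

end Game

section MaxEnt

variable {d : ℕ}

lemma maxEnt_isDensity (hd : 0 < d) : IsDensity (maxEnt d) := by
  set ψ : Fin d × Fin d → ℂ := fun p => if p.1 = p.2 then 1 else 0
  have hψ : maxEnt d = (d : ℂ)⁻¹ • vecMulVec ψ (star ψ) := by
    ext p q
    simp only [maxEnt, ite_and, Matrix.smul_apply, vecMulVec_apply, Pi.star_apply, RCLike.star_def,
      MonoidWithZeroHom.map_ite_one_zero, mul_ite, mul_one, mul_zero, smul_eq_mul, ψ]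
    split_ifs <;> rfl
  constructor
  · rw [hψ]
    exact (posSemidef_vecMulVec_self_star ψ).smul (by positivity)
  · simp only [trace, diag_apply, maxEnt, and_self, Fintype.sum_prod_type, Finset.sum_ite_eq,
      Finset.mem_univ, ↓reduceIte, Finset.sum_const, Finset.card_univ, Fintype.card_fin,
      nsmul_eq_mul]
    exact mul_inv_cancel₀ (by exact_mod_cast hd.ne')

lemma ptraceB_one_kronecker_mul_maxEnt_mul (B D : Mat d) :
    ptraceB (((1 : Mat d) ⊗ₖ B) * maxEnt d * ((1 : Mat d) ⊗ₖ D)) = (d : ℂ)⁻¹ • (D * B)ᵀ := by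
  ext i k
  simp only [ptraceB, Matrix.mul_apply, kroneckerMap_apply, Matrix.one_apply, ite_mul, one_mul,
    zero_mul, maxEnt, ite_and, mul_ite, mul_zero, Fintype.sum_prod_type, Finset.sum_ite_eq,
    Finset.mem_univ, ↓reduceIte, Finset.sum_ite_irrel, Finset.sum_const_zero, Finset.sum_ite_eq',
    transpose_mul, Matrix.smul_apply, transpose_apply, smul_eq_mul]
  rw [Finset.mul_sum]
  exact Finset.sum_congr rfl fun j _ => by ring

lemma condState_star_maxEnt {v : Fin d → ℂ} (hv : star v ⬝ᵥ v = 1) :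
    condState (star v) (maxEnt d) = (d : ℂ)⁻¹ • projv v := by
  have hv' : star (star v) ⬝ᵥ star v = 1 := by rw [star_star, dotProduct_comm, hv]
  rw [condState, ptraceB_one_kronecker_mul_maxEnt_mul, projv_mul_self hv', transpose_projv_star]

end MaxEnt

section Dephasing

variable {a b : ℕ}

def dephaseA (v : Fin a → Fin a → ℂ) (ρ : BMat a b) : BMat a b :=
  ∑ j, (projv (v j) ⊗ₖ (1 : Mat b)) * ρ * (projv (v j) ⊗ₖ (1 : Mat b))

lemma IsDensity.dephaseA {v : Fin a → Fin a → ℂ} (hv : IsRankOneMeas v) {ρ : BMat a b}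
    (hρ : IsDensity ρ) : IsDensity (dephaseA v ρ) := by
  refine ⟨posSemidef_sum _ fun j _ => hρ.1.mul_mul_of_isHermitian
    ((projv_posSemidef _).isHermitian.kronecker isHermitian_one), ?_⟩
  rw [_root_.dephaseA, trace_sum, ← hρ.2]
  refine sum_trace_mul_mul_of_idempotent (fun z => ?_) ?_ ρ
  · rw [← mul_kronecker_mul, Matrix.one_mul, hv.projv_mul_projv, if_pos rfl]
  · rw [← sum_kronecker, hv.sum_projv, one_kronecker_one]

lemma condState_dephaseA (u : Fin b → ℂ) (v : Fin a → Fin a → ℂ) (ρ : BMat a b) :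
    condState u (dephaseA v ρ) = ∑ j, projv (v j) * condState u ρ * projv (v j) := by
  simp only [condState, dephaseA, Finset.mul_sum, Finset.sum_mul, ptraceB_sum]
  refine Finset.sum_congr rfl fun j _ => ?_
  rw [← ptraceB_kronecker_one_mul_mul]
  set P := projv (v j) ⊗ₖ (1 : Mat b)
  set Q := (1 : Mat a) ⊗ₖ projv u
  have hQP : Q * P = projv (v j) ⊗ₖ projv u := by
    rw [← mul_kronecker_mul, Matrix.one_mul, Matrix.mul_one]
  have hPQ : P * Q = projv (v j) ⊗ₖ projv u := by
    rw [← mul_kronecker_mul, Matrix.one_mul, Matrix.mul_one]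
  calc ptraceB (Q * (P * ρ * P) * Q) = ptraceB (Q * P * ρ * (P * Q)) := by
        simp only [Matrix.mul_assoc]
    _ = ptraceB (P * Q * ρ * (Q * P)) := by rw [hQP, hPQ]
    _ = ptraceB (P * (Q * ρ * Q) * P) := by simp only [Matrix.mul_assoc]

lemma IsRankOneMeas.sum_projv_mul_mul_projv {v : Fin a → Fin a → ℂ} (hv : IsRankOneMeas v)
    (z : Fin a) : ∑ j, projv (v j) * projv (v z) * projv (v j) = projv (v z) := by
  simp [hv.projv_mul_projv]

lemma IsRankOneMeas.condState_star_dephaseA_maxEnt {v : Fin a → Fin a → ℂ}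
    (hv : IsRankOneMeas v) (z : Fin a) :
    condState (star (v z)) (dephaseA v (maxEnt a)) = (a : ℂ)⁻¹ • projv (v z) := by
  simp only [condState_dephaseA, condState_star_maxEnt (hv.dotProduct_self z), Matrix.mul_smul,
    Matrix.smul_mul, ← Finset.smul_sum, hv.sum_projv_mul_mul_projv]

lemma Rgame_eq_one {c : ℕ} {T : Matrix (Fin a) (Fin c) ℝ} (p : ℝ) {ρ : BMat a b}
    (hρ : R0 T ρ = 1) (hdephased : ∀ v, IsRankOneMeas v → R0 T (dephaseA v ρ) = 1) :
    Rgame T p ρ = 1 := by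
  let Meas := {v : Fin a → Fin a → ℂ // IsRankOneMeas v}
  have : Nonempty Meas := ⟨⟨_, isRankOneMeas_one⟩⟩
  change p * (⨅ v : Meas, R0 T (dephaseA v.1 ρ)) + (1 - p) * R0 T ρ = 1
  rw [iInf_congr fun v : Meas => hdephased v.1 v.2, ciInf_const, hρ]
  ring

end Dephasing

theorem reward_maxEnt_eq_one_general {d c : ℕ} (hd : 0 < d) (hc : 0 < c)
    (T : Matrix (Fin d) (Fin c) ℝ) (hT : ColStochastic T)
    (p : ℝ) :
    Rgame T p (maxEnt d) = 1 := by
  have hone : IsRankOneMeas fun z i => (1 : Mat d) z i := isRankOneMeas_one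
  refine Rgame_eq_one p ?_ fun v hv => ?_
  · exact R0_eq_one_of_condState_eq hc hT (maxEnt_isDensity hd) hd hone.conj
      hone.dotProduct_self fun z => condState_star_maxEnt (hone.dotProduct_self z)
  · exact R0_eq_one_of_condState_eq hc hT ((maxEnt_isDensity hd).dephaseA hv) hd hv.conj
      hv.dotProduct_self hv.condState_star_dephaseA_maxEnt

/-- the reward of any gambling game on the maximally entangled state is 1. -/
theorem reward_maxEnt_eq_one {d c : ℕ} (hd : 0 < d) (hc : 0 < c)
    (T : Matrix (Fin d) (Fin c) ℝ) (hT : ColStochastic T)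
    (p : ℝ) (hp0 : 0 ≤ p) (hp1 : p ≤ 1) :
    Rgame T p (maxEnt d) = 1 :=
  reward_maxEnt_eq_one_general hd hc T hT p
end
end
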